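/- arXiv:1811.07228 — 6 statements merged into one kernel-verified Lean document; each statement's English description precedes it below -/
import Mathlib

section
/- Let N > 0 and t' ≥ 0. Let I : (0,∞) → [0,∞) be a nonincreasing function and let E : (0,∞) → ℝ satisfy the dissipation identity E(s) − E(t) = ∫_s^t I(r) dr for all 0 < s < t. Assume moreover that (t+t')² I(t) ≤ (s+t')² I(s) + (N/2)(t−s) for all 0 < s < t. Then the function W(t) := (t+t') I(t) − E(t) − (N/2) log(t+t') is nonincreasing on (0,∞). -/
/-!
Comparing with the control at the left endpoint, `I r ≤ ((s+t')² I s + N/2 (r-s)) / (r+t')²`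
on `(s,t)`, and integrating this rational function bounds `E s - E t = ∫ r in s..t, I r`
explicitly. What remains of `W t - W s` is the control at `(s,t)` itself, divided by `t + t'`.
-/

open MeasureTheory intervalIntegral Real

theorem integral_affine_div_sq {a b : ℝ} (c k : ℝ) (ha : 0 < a) (hab : a ≤ b) :
    ∫ u in a..b, (c + k * u) / u ^ 2 = c * (a⁻¹ - b⁻¹) + k * (log b - log a) := by
  have hpos : ∀ u ∈ Set.uIcc a b, 0 < u := fun u hu =>
    ha.trans_le (Set.uIcc_of_le hab ▸ hu).1
  have hderiv : ∀ u ∈ Set.uIcc a b,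
      HasDerivAt (fun u => -c * u⁻¹ + k * log u) ((c + k * u) / u ^ 2) u := by
    intro u hu
    have hu : u ≠ 0 := (hpos u hu).ne'
    refine (((hasDerivAt_inv hu).const_mul (-c)).add
      ((hasDerivAt_log hu).const_mul k)).congr_deriv ?_
    field_simp
  have hcont : ContinuousOn (fun u : ℝ => (c + k * u) / u ^ 2) (Set.uIcc a b) :=
    (continuousOn_const.add (continuousOn_const.mul continuousOn_id)).div
      (continuousOn_id.pow 2) fun u hu => pow_ne_zero 2 (hpos u hu).ne'
  rw [integral_eq_sub_of_hasDerivAt hderiv hcont.intervalIntegrable]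
  ring

theorem integral_le_of_shifted_sq_mul_le {I : ℝ → ℝ} {s t t' : ℝ} (k : ℝ) (hs : 0 < s + t')
    (hst : s ≤ t) (hI : IntervalIntegrable I volume s t)
    (hctrl : ∀ r ∈ Set.Ioo s t, (r + t') ^ 2 * I r ≤ (s + t') ^ 2 * I s + k * (r - s)) :
    ∫ r in s..t, I r ≤
      ((s + t') ^ 2 * I s - k * (s + t')) * ((s + t')⁻¹ - (t + t')⁻¹)
        + k * (log (t + t') - log (s + t')) := by
  set c := (s + t') ^ 2 * I s - k * (s + t')
  have hpos : ∀ r ∈ Set.Icc s t, 0 < r + t' := fun r hr => by linarith [hr.1]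
  have hg : IntervalIntegrable (fun r => (c + k * (r + t')) / (r + t') ^ 2) volume s t :=
    ContinuousOn.intervalIntegrable_of_Icc hst <|
      ContinuousOn.div (by fun_prop) (by fun_prop) fun r hr => pow_ne_zero 2 (hpos r hr).ne'
  calc ∫ r in s..t, I r ≤ ∫ r in s..t, (c + k * (r + t')) / (r + t') ^ 2 := by
        refine integral_mono_on_of_le_Ioo hst hI hg fun r hr => ?_
        rw [le_div_iff₀ (pow_pos (hpos r (Set.Ioo_subset_Icc_self hr)) 2)]
        linarith [hctrl r hr]
    _ = _ := by
        rw [integral_comp_add_right (fun u => (c + k * u) / u ^ 2),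
          integral_affine_div_sq c k hs (by linarith)]

theorem sub_add_mul_inv_sub_inv_eq_div {a b : ℝ} (x y k : ℝ) (ha : a ≠ 0) (hb : b ≠ 0) :
    b * y - a * x + (a ^ 2 * x - k * a) * (a⁻¹ - b⁻¹)
      = (b ^ 2 * y - a ^ 2 * x - k * (b - a)) / b := by
  field_simp
  ring

theorem w_entropy_monotone_general
    (N t' : ℝ) (ht' : 0 ≤ t')
    (I E : ℝ → ℝ)
    (hImono : ∀ s t, 0 < s → s ≤ t → I t ≤ I s)
    (hdiss : ∀ s t, 0 < s → s < t → E s - E t = ∫ r in s..t, I r)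
    (hctrl : ∀ s t, 0 < s → s < t →
      (t + t') ^ 2 * I t ≤ (s + t') ^ 2 * I s + N / 2 * (t - s)) :
    ∀ s t, 0 < s → s ≤ t →
      (t + t') * I t - E t - N / 2 * Real.log (t + t')
        ≤ (s + t') * I s - E s - N / 2 * Real.log (s + t') := by
  intro s t hs hst
  obtain rfl | hlt := hst.eq_or_lt
  · exact le_rfl
  have ha : 0 < s + t' := by linarith
  have hb : 0 < t + t' := by linarith
  have hI : IntervalIntegrable I volume s t :=
    AntitoneOn.intervalIntegrable fun x hx y _ hxy =>
      hImono x y (hs.trans_le (Set.uIcc_of_le hst ▸ hx).1) hxy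
  have hint := integral_le_of_shifted_sq_mul_le (N / 2) ha hst hI
    fun r hr => hctrl s r hs hr.1
  have hboundary : (t + t') * I t - (s + t') * I s
      + ((s + t') ^ 2 * I s - N / 2 * (s + t')) * ((s + t')⁻¹ - (t + t')⁻¹) ≤ 0 := by
    rw [sub_add_mul_inv_sub_inv_eq_div _ _ _ ha.ne' hb.ne']
    refine div_nonpos_of_nonpos_of_nonneg ?_ hb.le
    linarith [hctrl s t hs hlt]
  linarith [hdiss s t hs hlt]

/-- Real-variable core of the monotonicity of the W-entropy along heat flow:
if `I` is nonincreasing and nonnegative on `(0,∞)`, `E` satisfies the entropy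
dissipation identity, and the rescaled Fisher information control holds, then
`W(t) = (t+t') I(t) - E(t) - (N/2) log (t+t')` is nonincreasing on `(0,∞)`. -/
theorem w_entropy_monotone
    (N t' : ℝ) (hN : 0 < N) (ht' : 0 ≤ t')
    (I E : ℝ → ℝ)
    (hInonneg : ∀ t, 0 < t → 0 ≤ I t)
    (hImono : ∀ s t, 0 < s → s ≤ t → I t ≤ I s)
    (hdiss : ∀ s t, 0 < s → s < t → E s - E t = ∫ r in s..t, I r)
    (hctrl : ∀ s t, 0 < s → s < t →
      (t + t') ^ 2 * I t ≤ (s + t') ^ 2 * I s + N / 2 * (t - s)) :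
    ∀ s t, 0 < s → s ≤ t →
      (t + t') * I t - E t - N / 2 * Real.log (t + t')
        ≤ (s + t') * I s - E s - N / 2 * Real.log (s + t') :=
  w_entropy_monotone_general N t' ht' I E hImono hdiss hctrl
end

section
/- Let N ∈ [1,∞) and let f : [0,∞) → ℝ be a measurable function such that ∫₀^∞ r^n |f(r)| e^{−r/2} dr < ∞ for all n ∈ ℕ. Suppose that ((N+2)/2) ∫₀^∞ f(r) e^{−ξ r} dr = ξ ∫₀^∞ r f(r) e^{−ξ r} dr holds for every ξ ∈ (1/2, 2). Then there exists a constant c₁ ∈ ℝ such that f(r) = c₁ r^{N/2} for almost every r ∈ [0,∞). -/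
/-!
Write `F(ξ) = ∫₀^∞ f(r) e^{-ξr} dr`. Since `F' = -∫₀^∞ r f(r) e^{-ξr} dr`, the hypothesis is the
Euler-type equation `p F + ξ F' = 0` with `p = (N+2)/2`, so `F(ξ) = C ξ^{-p}` on `(1/2, 2)`. This is
also the Laplace transform of `c₁ r^{N/2}` for `c₁ = C / Γ(p)`, hence `g = f - c₁ r^{N/2}` has a
Laplace transform vanishing on `(1/2, 2)`. That transform is holomorphic on `Re s > 1/2`, so it
vanishes there by the identity theorem; on the line `Re s = 3/2` it is the Fourier transform of
`g(r) e^{-3r/2} 1_{r ≥ 0}`, and injectivity of the Fourier transform on `L¹` gives `g = 0` a.e.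
-/

open MeasureTheory Real Set Filter Topology
open scoped FourierTransform SchwartzMap Complex

noncomputable def laplace (u : ℝ → ℂ) (s : ℂ) : ℂ :=
  ∫ r in Ici 0, u r * cexp (-s * r)

structure HasExpMoments (u : ℝ → ℂ) (a : ℝ) : Prop where
  aestronglyMeasurable : AEStronglyMeasurable u (volume.restrict (Ici 0))
  integrableOn_pow_mul : ∀ n : ℕ, IntegrableOn (fun r => r ^ n * ‖u r‖ * rexp (-a * r)) (Ici 0)

section Laplace

variable {u v : ℝ → ℂ} {a : ℝ}

theorem norm_mul_cexp_neg_mul_le {r : ℝ} (hr : 0 ≤ r) {s : ℂ} (hs : a ≤ s.re) (z : ℂ) :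
    ‖z * cexp (-s * r)‖ ≤ ‖z‖ * rexp (-a * r) := by
  rw [norm_mul, Complex.norm_exp]
  gcongr
  simpa using mul_le_mul_of_nonneg_right hs hr

namespace HasExpMoments

theorem ofReal_mul (hu : HasExpMoments u a) : HasExpMoments (fun r => r * u r) a where
  aestronglyMeasurable := by have := hu.aestronglyMeasurable; fun_prop
  integrableOn_pow_mul n := (hu.integrableOn_pow_mul (n + 1)).congr_fun (fun r (hr : 0 ≤ r) => by
    simp [abs_of_nonneg hr, pow_succ, mul_assoc]) measurableSet_Ici

theorem const_mul (hu : HasExpMoments u a) (c : ℂ) : HasExpMoments (fun r => c * u r) a where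
  aestronglyMeasurable := by have := hu.aestronglyMeasurable; fun_prop
  integrableOn_pow_mul n := IntegrableOn.congr_fun ((hu.integrableOn_pow_mul n).const_mul ‖c‖)
    (fun r _ => by simp only [norm_mul]; ring) measurableSet_Ici

theorem sub (hu : HasExpMoments u a) (hv : HasExpMoments v a) : HasExpMoments (u - v) a where
  aestronglyMeasurable := hu.aestronglyMeasurable.sub hv.aestronglyMeasurable
  integrableOn_pow_mul n := by
    have := hu.aestronglyMeasurable
    have := hv.aestronglyMeasurable
    refine ((hu.integrableOn_pow_mul n).add (hv.integrableOn_pow_mul n)).mono' (by fun_prop) ?_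
    filter_upwards [ae_restrict_mem measurableSet_Ici] with r (hr : 0 ≤ r)
    simp only [Pi.add_apply, Pi.sub_apply]
    rw [Real.norm_of_nonneg (by positivity), ← add_mul, ← mul_add]
    gcongr
    exact norm_sub_le _ _

theorem integrableOn (hu : HasExpMoments u a) {s : ℂ} (hs : a ≤ s.re) :
    IntegrableOn (fun r => u r * cexp (-s * r)) (Ici 0) := by
  have := hu.aestronglyMeasurable
  refine (hu.integrableOn_pow_mul 0).mono' (by fun_prop) ?_
  filter_upwards [ae_restrict_mem measurableSet_Ici] with r hr
  simpa using norm_mul_cexp_neg_mul_le hr hs (u r)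

end HasExpMoments

theorem hasExpMoments_rpow {s : ℝ} (hs : -1 < s) (ha : 0 < a) :
    HasExpMoments (fun r => ((r ^ s : ℝ) : ℂ)) a where
  aestronglyMeasurable := by fun_prop
  integrableOn_pow_mul n := by
    rw [integrableOn_Ici_iff_integrableOn_Ioi]
    refine (integrableOn_rpow_mul_exp_neg_mul_rpow (s := n + s) (p := 1)
      (by linarith [n.cast_nonneg (α := ℝ)]) one_pos ha).congr_fun
      (fun r (hr : 0 < r) => ?_) measurableSet_Ioi
    simp [Real.rpow_add hr, abs_of_nonneg (Real.rpow_nonneg hr.le _)]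

theorem laplace_sub {s : ℂ} (hu : IntegrableOn (fun r => u r * cexp (-s * r)) (Ici 0))
    (hv : IntegrableOn (fun r => v r * cexp (-s * r)) (Ici 0)) :
    laplace (u - v) s = laplace u s - laplace v s := by
  simp only [laplace, Pi.sub_apply, sub_mul, integral_sub hu hv]

theorem laplace_const_mul (c s : ℂ) : laplace (fun r => c * u r) s = c * laplace u s := by
  simp only [laplace, mul_assoc, integral_const_mul]

theorem laplace_ofReal (u : ℝ → ℝ) (ξ : ℝ) :
    laplace (fun r => (u r : ℂ)) ξ = ↑(∫ r in Ici 0, u r * rexp (-ξ * r)) := by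
  rw [laplace, ← integral_complex_ofReal]
  congr 1 with r
  push_cast
  rfl

theorem laplace_ofReal_rpow {s ξ : ℝ} (hs : -1 < s) (hξ : 0 < ξ) :
    laplace (fun r => ((r ^ s : ℝ) : ℂ)) ξ = ↑(Gamma (s + 1) * ξ ^ (-(s + 1))) := by
  rw [laplace_ofReal, integral_Ici_eq_integral_Ioi]
  have := integral_rpow_mul_exp_neg_mul_Ioi (a := s + 1) (by linarith) hξ
  simp only [add_sub_cancel_right] at this
  simp only [neg_mul]
  rw [this, one_div, Real.inv_rpow hξ.le, Real.rpow_neg hξ.le, mul_comm]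

theorem hasDerivAt_laplace (hu : HasExpMoments u a) {s : ℂ} (hs : a < s.re) :
    HasDerivAt (laplace u) (-laplace (fun r => r * u r) s) s := by
  have hball : Metric.ball s (s.re - a) ⊆ {z : ℂ | a ≤ z.re} := fun z hz => by
    have := (Complex.abs_re_le_norm (z - s)).trans_lt (mem_ball_iff_norm.1 hz)
    rw [Complex.sub_re, abs_lt] at this
    exact (by linarith : a ≤ z.re)
  have := hu.aestronglyMeasurable
  have key := hasDerivAt_integral_of_dominated_loc_of_deriv_le
    (F := fun (z : ℂ) (r : ℝ) => u r * cexp (-z * r))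
    (F' := fun (z : ℂ) (r : ℝ) => -((r : ℂ) * u r * cexp (-z * r)))
    (bound := fun r : ℝ => ‖(r : ℂ) * u r‖ * rexp (-a * r))
    (Metric.ball_mem_nhds s (sub_pos.2 hs)) (.of_forall fun z => by fun_prop)
    (hu.integrableOn hs.le) (by fun_prop) ?_ ?_ ?_
  · rw [laplace, ← integral_neg]
    exact key.2
  · filter_upwards [ae_restrict_mem measurableSet_Ici] with r hr z hz
    simpa [mul_assoc] using norm_mul_cexp_neg_mul_le hr (hball hz) (r * u r)
  · simpa [IntegrableOn] using hu.ofReal_mul.integrableOn_pow_mul 0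
  · filter_upwards with r z _
    simpa [mul_comm, mul_left_comm, mul_assoc] using
      ((((hasDerivAt_id z).neg.mul_const (r : ℂ)).cexp).const_mul (u r))

theorem laplace_eqOn_zero_of_eqOn_Ioo (hu : HasExpMoments u a) {b c : ℝ} (hab : a ≤ b)
    (hbc : b < c) (h : ∀ ξ ∈ Ioo b c, laplace u ξ = 0) :
    EqOn (laplace u) 0 {s : ℂ | a < s.re} := by
  have hana : AnalyticOnNhd ℂ (laplace u) {s : ℂ | a < s.re} :=
    DifferentiableOn.analyticOnNhd
      (fun s hs => (hasDerivAt_laplace hu hs).differentiableAt.differentiableWithinAt)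
      (isOpen_lt continuous_const Complex.continuous_re)
  obtain ⟨m, hm⟩ := nonempty_Ioo.2 hbc
  refine hana.eqOn_zero_of_preconnected_of_frequently_eq_zero
    (convex_halfSpace_re_gt a).isPreconnected (z₀ := (m : ℂ)) (by simpa using hab.trans_lt hm.1) ?_
  have hreal : Tendsto ((↑) : ℝ → ℂ) (𝓝[≠] m) (𝓝[≠] (m : ℂ)) :=
    Complex.continuous_ofReal.continuousWithinAt.tendsto_nhdsWithin fun x hx => by simpa using hx
  exact hreal.frequently (eventually_nhdsWithin_of_eventually_nhds
    (eventually_of_mem (isOpen_Ioo.mem_nhds hm) h)).frequently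

theorem fourier_indicator_eq_laplace (u : ℝ → ℂ) (σ t : ℝ) :
    𝓕 ((Ici 0).indicator fun r => u r * cexp (-σ * r)) t =
      laplace u (σ + 2 * π * t * Complex.I) := by
  rw [Real.fourier_real_eq_integral_exp_smul, laplace, ← integral_indicator measurableSet_Ici]
  congr 1 with r
  by_cases hr : r ∈ Ici (0 : ℝ)
  · simp only [indicator_of_mem hr, smul_eq_mul, mul_left_comm _ (u r), ← Complex.exp_add]
    congr 2
    push_cast
    ring
  · simp [indicator_of_notMem hr]

theorem MeasureTheory.Integrable.ae_eq_zero_of_fourier_eq_zero {V : Type*}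
    [NormedAddCommGroup V] [InnerProductSpace ℝ V] [FiniteDimensional ℝ V]
    [MeasurableSpace V] [BorelSpace V] {h : V → ℂ} (hh : Integrable h) (hF : 𝓕 h = 0) :
    ∀ᵐ x, h x = 0 := by
  refine ae_eq_zero_of_integral_contDiff_smul_eq_zero hh.locallyIntegrable fun φ hφ hφc => ?_
  -- `∫ φ • h = ∫ h • 𝓕 (𝓕⁻ φ) = ∫ 𝓕 h • 𝓕⁻ φ = 0`, with `φ` promoted to a Schwartz function
  let ψ : 𝓢(V, ℂ) := HasCompactSupport.toSchwartzMap (f := Complex.ofRealCLM ∘ φ)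
    (hφc.comp_left rfl) (by fun_prop)
  have key := VectorFourier.integral_fourierIntegral_smul_eq_flip (L := innerₗ V)
    Real.continuous_fourierChar continuous_inner hh ((𝓕⁻ ψ : 𝓢(V, ℂ)).integrable (μ := volume))
  rw [flip_innerₗ] at key
  change ∫ ξ, 𝓕 h ξ • (𝓕⁻ ψ) ξ = ∫ x, h x • 𝓕 ((𝓕⁻ ψ : 𝓢(V, ℂ)) : V → ℂ) x at key
  rw [← SchwartzMap.fourier_coe, FourierTransform.fourier_fourierInv_eq, hF] at key
  simpa [ψ, mul_comm] using key.symm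

theorem ae_eq_zero_of_laplace_eqOn_zero (hu : HasExpMoments u a)
    (h : EqOn (laplace u) 0 {s : ℂ | a < s.re}) : ∀ᵐ r ∂volume.restrict (Ici 0), u r = 0 := by
  set w := (Ici 0).indicator fun r => u r * cexp (-(a + 1 : ℝ) * r)
  have hw : Integrable w :=
    (integrable_indicator_iff measurableSet_Ici).2 (hu.integrableOn (by simp))
  have hFw : 𝓕 w = 0 := funext fun t => by
    rw [fourier_indicator_eq_laplace]
    exact h (by simp)
  filter_upwards [ae_restrict_of_ae (hw.ae_eq_zero_of_fourier_eq_zero hFw),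
    ae_restrict_mem measurableSet_Ici] with r hr hr0
  simpa [w, indicator_of_mem hr0, Complex.exp_ne_zero] using hr

theorem hasDerivAt_integral_mul_exp_neg_mul {u : ℝ → ℝ}
    (hu : HasExpMoments (fun r => (u r : ℂ)) a) {ξ : ℝ} (hξ : a < ξ) :
    HasDerivAt (fun ξ => ∫ r in Ici 0, u r * rexp (-ξ * r))
      (-∫ r in Ici 0, r * u r * rexp (-ξ * r)) ξ := by
  have hru : (fun r : ℝ => (r : ℂ) * u r) = fun r => ((r * u r : ℝ) : ℂ) := by push_cast; rfl
  simpa [hru, laplace_ofReal] using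
    (hasDerivAt_laplace hu (s := ξ) (by simpa using hξ)).real_of_complex

end Laplace

theorem exists_eqOn_rpow_neg_smul_of_hasDerivAt {E : Type*} [NormedAddCommGroup E]
    [NormedSpace ℝ E] {F F' : ℝ → E} {p b c : ℝ} (hb : 0 ≤ b)
    (hF : ∀ ξ ∈ Ioo b c, HasDerivAt F (F' ξ) ξ) (hode : ∀ ξ ∈ Ioo b c, ξ • F' ξ = -p • F ξ) :
    ∃ C : E, EqOn F (fun ξ => ξ ^ (-p) • C) (Ioo b c) := by
  have hK : ∀ ξ ∈ Ioo b c, HasDerivAt (fun ξ => ξ ^ p • F ξ) 0 ξ := fun ξ hξ => by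
    have hξ0 : 0 < ξ := hb.trans_lt hξ.1
    refine ((Real.hasDerivAt_rpow_const (Or.inl hξ0.ne')).smul (hF ξ hξ)).congr_deriv ?_
    rw [show ξ ^ p = ξ ^ (p - 1) * ξ by rw [← Real.rpow_add_one hξ0.ne', sub_add_cancel],
      mul_smul, hode ξ hξ, smul_smul, ← add_smul,
      show ξ ^ (p - 1) * -p + p * ξ ^ (p - 1) = 0 by ring, zero_smul]
  obtain ⟨C, hC⟩ := isOpen_Ioo.exists_is_const_of_deriv_eq_zero isPreconnected_Ioo
    (fun ξ hξ => (hK ξ hξ).differentiableAt.differentiableWithinAt)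
    (fun ξ hξ => (hK ξ hξ).deriv)
  refine ⟨C, fun ξ hξ => ?_⟩
  have hξ0 : 0 < ξ := hb.trans_lt hξ.1
  simp only [← hC ξ hξ, smul_smul, ← Real.rpow_add hξ0, neg_add_cancel, Real.rpow_zero, one_smul]

theorem exists_integral_mul_exp_neg_mul_eq_rpow {u : ℝ → ℝ} {a p b c : ℝ}
    (hu : HasExpMoments (fun r => (u r : ℂ)) a) (hab : a ≤ b) (hb : 0 ≤ b)
    (heq : ∀ ξ ∈ Ioo b c,
      p * ∫ r in Ici 0, u r * rexp (-ξ * r) = ξ * ∫ r in Ici 0, r * u r * rexp (-ξ * r)) :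
    ∃ C : ℝ, ∀ ξ ∈ Ioo b c, ∫ r in Ici 0, u r * rexp (-ξ * r) = ξ ^ (-p) * C :=
  exists_eqOn_rpow_neg_smul_of_hasDerivAt hb
    (fun ξ hξ => hasDerivAt_integral_mul_exp_neg_mul hu (hab.trans_lt hξ.1))
    (fun ξ hξ => by simp only [smul_eq_mul]; linear_combination heq ξ hξ)

/-- The Laplace-transform lemma: if `f` has all polynomial moments against
`e^{-r/2}` finite on `[0,∞)` and satisfies the functional equation
`((N+2)/2) ∫ f e^{-ξr} = ξ ∫ r f e^{-ξr}` for all `ξ ∈ (1/2, 2)`, then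
`f(r) = c₁ r^{N/2}` for a.e. `r ∈ [0,∞)`. -/
theorem laplace_rigidity
    (N : ℝ) (hN : 1 ≤ N)
    (f : ℝ → ℝ) (hf : Measurable f)
    (hint : ∀ n : ℕ,
      IntegrableOn (fun r => r ^ n * |f r| * Real.exp (-r / 2)) (Set.Ici 0))
    (heq : ∀ ξ ∈ Set.Ioo (1/2 : ℝ) 2,
      (N + 2) / 2 * ∫ r in Set.Ici (0:ℝ), f r * Real.exp (-ξ * r)
        = ξ * ∫ r in Set.Ici (0:ℝ), r * f r * Real.exp (-ξ * r)) :
    ∃ c₁ : ℝ, ∀ᵐ r ∂(volume.restrict (Set.Ici (0:ℝ))), f r = c₁ * r ^ (N / 2) := by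
  have hfm : HasExpMoments (fun r => (f r : ℂ)) (1 / 2) := ⟨by fun_prop, fun n =>
    (hint n).congr_fun (fun r _ => by simp only [Complex.norm_real, norm_eq_abs]; ring_nf)
      measurableSet_Ici⟩
  obtain ⟨C, hC⟩ := exists_integral_mul_exp_neg_mul_eq_rpow hfm le_rfl (by norm_num) heq
  have hwm : HasExpMoments (fun r => ((C / Gamma ((N + 2) / 2) : ℝ) : ℂ) * ((r ^ (N / 2) : ℝ) : ℂ))
      (1 / 2) :=
    (hasExpMoments_rpow (by linarith) (by norm_num)).const_mul _
  have hgm := hfm.sub hwm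
  have hLg : ∀ ξ ∈ Ioo (1 / 2 : ℝ) 2, laplace (_ - _) ξ = 0 := fun ξ hξ => by
    have hre : 1 / 2 ≤ (ξ : ℂ).re := by simpa using hξ.1.le
    have hΓ : Gamma ((N + 2) / 2) ≠ 0 := (Gamma_pos_of_pos (by positivity)).ne'
    rw [laplace_sub (hfm.integrableOn hre) (hwm.integrableOn hre), laplace_const_mul,
      laplace_ofReal, laplace_ofReal_rpow (by linarith) (by linarith [hξ.1]),
      show N / 2 + 1 = (N + 2) / 2 by ring, hC ξ hξ, ← Complex.ofReal_mul, ← Complex.ofReal_sub,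
      Complex.ofReal_eq_zero]
    field_simp
    ring
  refine ⟨C / Gamma ((N + 2) / 2), ?_⟩
  filter_upwards [ae_eq_zero_of_laplace_eqOn_zero hgm
    (laplace_eqOn_zero_of_eqOn_Ioo hgm le_rfl (by norm_num) hLg)] with r hr
  simp only [Pi.sub_apply, sub_eq_zero] at hr
  exact_mod_cast hr
end

section
/- Let g : [0,∞) → ℝ be a measurable function such that ∫₀^∞ r^n |g(r)| e^{−r/2} dr < ∞ for all n ∈ ℕ, and suppose that ∫₀^∞ r^n g(r) e^{−r} dr = 0 for every integer n ≥ 0. Then g(r) = 0 for almost every r ∈ [0,∞). -/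
/-!
Split `g(r) e^{-r}` into its positive and negative parts and regard them as densities of two
finite measures on `[0,∞)`. The bound `∫ |g(r)| e^{-r/2} dr < ∞` makes the complex moment
generating functions of both measures analytic on the strip `Re z < 1/2`. Equal moments give
them the same Taylor series at `0`, so by the identity theorem they agree on the whole strip,
in particular on the imaginary axis. Hence the characteristic functions, and with them the two
measures, coincide, which forces `g = 0` almost everywhere.
-/

open MeasureTheory Real ProbabilityTheory Filter Topology
open scoped NNReal

section WithDensity

variable {μ : Measure ℝ} {k : ℝ → ℝ≥0} {ε : ℝ}

lemma mem_integrableExpSet_withDensity_of_abs_le (hk : Measurable k)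
    (hexp : Integrable (fun x => exp (ε * |x|) * k x) μ) {t : ℝ} (ht : |t| ≤ ε) :
    t ∈ integrableExpSet id (μ.withDensity fun x => k x) := by
  rw [integrableExpSet, Set.mem_ofPred_eq, integrable_withDensity_iff_integrable_smul hk]
  refine hexp.mono (by fun_prop) (ae_of_all _ fun x => ?_)
  have hexp_le : exp (t * x) ≤ exp (ε * |x|) := exp_le_exp.2 <| calc
    t * x ≤ |t| * |x| := by rw [← abs_mul]; exact le_abs_self _
    _ ≤ ε * |x| := by gcongr
  simp only [id, NNReal.smul_def, smul_eq_mul, norm_mul, norm_eq_abs, abs_exp, NNReal.abs_eq]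
  rw [mul_comm]
  gcongr

lemma zero_mem_interior_integrableExpSet_withDensity (hk : Measurable k) (hε : 0 < ε)
    (hexp : Integrable (fun x => exp (ε * |x|) * k x) μ) :
    0 ∈ interior (integrableExpSet id (μ.withDensity fun x => k x)) :=
  mem_interior_iff_mem_nhds.2 <| mem_of_superset (Ioo_mem_nhds (neg_lt_zero.2 hε) hε)
    fun _ ht => mem_integrableExpSet_withDensity_of_abs_le hk hexp (abs_lt.2 ht).le

lemma isFiniteMeasure_withDensity_of_integrable_exp (hk : Measurable k) (hε : 0 ≤ ε)
    (hexp : Integrable (fun x => exp (ε * |x|) * k x) μ) :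
    IsFiniteMeasure (μ.withDensity fun x => k x) := by
  have h0 := mem_integrableExpSet_withDensity_of_abs_le hk hexp (t := 0) (by simpa using hε)
  simp only [integrableExpSet, Set.mem_ofPred_eq, zero_mul, exp_zero] at h0
  exact (integrable_const_iff_isFiniteMeasure one_ne_zero).1 h0

end WithDensity

theorem MeasureTheory.Measure.ext_of_integral_pow_eq {μ ν : Measure ℝ}
    [IsFiniteMeasure μ] [IsFiniteMeasure ν]
    (hμ : 0 ∈ interior (integrableExpSet id μ)) (hν : 0 ∈ interior (integrableExpSet id ν))
    (h : ∀ n : ℕ, ∫ x, x ^ n ∂μ = ∫ x, x ^ n ∂ν) : μ = ν := by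
  set S : Set ℂ :=
    {z | z.re ∈ interior (integrableExpSet id μ) ∩ interior (integrableExpSet id ν)}
  have hSμ : AnalyticOnNhd ℂ (complexMGF id μ) S :=
    analyticOnNhd_complexMGF.mono fun z hz => hz.1
  have hSν : AnalyticOnNhd ℂ (complexMGF id ν) S :=
    analyticOnNhd_complexMGF.mono fun z hz => hz.2
  have hS : IsPreconnected S :=
    ((convex_integrableExpSet.interior.inter convex_integrableExpSet.interior).linear_preimage
      Complex.reLm).isPreconnected
  have h0 : (0 : ℂ) ∈ S := ⟨by simpa using hμ, by simpa using hν⟩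
  have hderiv : ∀ n,
      iteratedDeriv n (complexMGF id μ) 0 = iteratedDeriv n (complexMGF id ν) 0 := by
    intro n
    rw [iteratedDeriv_complexMGF (by simpa using hμ),
      iteratedDeriv_complexMGF (by simpa using hν)]
    simp only [id, zero_mul, Complex.exp_zero, mul_one, ← Complex.ofReal_pow]
    rw [integral_complex_ofReal, integral_complex_ofReal, h n]
  have hnear : complexMGF id μ =ᶠ[𝓝 0] complexMGF id ν := by
    have hpμ := (hSμ 0 h0).hasFPowerSeriesAt
    simp_rw [hderiv] at hpμ
    have := hpμ.sub (hSν 0 h0).hasFPowerSeriesAt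
    rw [sub_self] at this
    filter_upwards [this.eventually_eq_zero] with z hz
    exact sub_eq_zero.1 hz
  have hEq := hSμ.eqOn_of_preconnected_of_eventuallyEq hSν hS h0 hnear
  refine Measure.ext_of_charFun (funext fun t => ?_)
  rw [← complexMGF_id_mul_I, ← complexMGF_id_mul_I]
  exact hEq ⟨by simpa using hμ, by simpa using hν⟩

theorem MeasureTheory.ae_eq_zero_of_integral_pow_mul_eq_zero {μ : Measure ℝ}
    {h : ℝ → ℝ} (hh : Measurable h) {ε : ℝ} (hε : 0 < ε)
    (hexp : Integrable (fun x => exp (ε * |x|) * h x) μ)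
    (hmom : ∀ n : ℕ, ∫ x, x ^ n * h x ∂μ = 0) : h =ᵐ[μ] 0 := by
  have hexp_part : ∀ s : ℝ → ℝ, Measurable s → (∀ x, |s x| = |h x|) →
      Integrable (fun x => exp (ε * |x|) * (s x).toNNReal) μ := fun s hsm hs =>
    hexp.mono (by fun_prop) <| ae_of_all _ fun x => by
      simp only [norm_mul, norm_eq_abs, abs_exp, Real.coe_toNNReal', ← hs x]
      exact mul_le_mul_of_nonneg_left (by grind) (exp_pos _).le
  set hp : ℝ → ℝ≥0 := fun x => (h x).toNNReal
  set hn : ℝ → ℝ≥0 := fun x => (-h x).toNNReal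
  have hpm : Measurable hp := hh.real_toNNReal
  have hnm : Measurable hn := hh.neg.real_toNNReal
  have hp_exp := hexp_part h hh fun _ => rfl
  have hn_exp := hexp_part (-h) hh.neg fun _ => abs_neg _
  have := isFiniteMeasure_withDensity_of_integrable_exp hpm hε.le hp_exp
  have := isFiniteMeasure_withDensity_of_integrable_exp hnm hε.le hn_exp
  have hp0 := zero_mem_interior_integrableExpSet_withDensity hpm hε hp_exp
  have hn0 := zero_mem_interior_integrableExpSet_withDensity hnm hε hn_exp
  have hmoments : ∀ n : ℕ, ∫ x, x ^ n ∂(μ.withDensity fun x => hp x) =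
      ∫ x, x ^ n ∂(μ.withDensity fun x => hn x) := by
    intro n
    have hp_int : Integrable (fun x => hp x • x ^ n) μ :=
      (integrable_withDensity_iff_integrable_smul hpm).1
        (integrable_pow_of_mem_interior_integrableExpSet hp0 n)
    have hn_int : Integrable (fun x => hn x • x ^ n) μ :=
      (integrable_withDensity_iff_integrable_smul hnm).1
        (integrable_pow_of_mem_interior_integrableExpSet hn0 n)
    rw [integral_withDensity_eq_integral_smul hpm, integral_withDensity_eq_integral_smul hnm,
      ← sub_eq_zero, ← integral_sub hp_int hn_int, ← hmom n]
    congr 1 with x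
    simp only [hp, hn, NNReal.smul_def, smul_eq_mul, Real.coe_toNNReal']
    rw [← sub_mul, max_zero_sub_max_neg_zero_eq_self, mul_comm]
  have hν := Measure.ext_of_integral_pow_eq hp0 hn0 hmoments
  rw [withDensity_eq_iff (by fun_prop) (by fun_prop)
    (by simpa using measure_ne_top (μ.withDensity fun x => hp x) Set.univ)] at hν
  filter_upwards [hν] with x hx
  have hx' := congrArg NNReal.toReal (ENNReal.coe_injective hx)
  simp only [hp, hn, Real.coe_toNNReal'] at hx'
  simp only [Pi.zero_apply]
  grind

/-- Completeness of polynomials in `L²(e^{-r} dr)`: a measurable function on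
`[0,∞)` with all polynomial moments against `e^{-r/2}` finite, and with all
moments against the weight `e^{-r}` vanishing, is zero almost everywhere. -/
theorem vanishing_moments
    (g : ℝ → ℝ) (hg : Measurable g)
    (hint : ∀ n : ℕ,
      IntegrableOn (fun r => r ^ n * |g r| * Real.exp (-r / 2)) (Set.Ici 0))
    (hmom : ∀ n : ℕ,
      ∫ r in Set.Ici (0:ℝ), r ^ n * g r * Real.exp (-r) = 0) :
    ∀ᵐ r ∂(volume.restrict (Set.Ici (0:ℝ))), g r = 0 := by
  have hexp : IntegrableOn (fun r => exp (1 / 2 * |r|) * (g r * exp (-r))) (Set.Ici 0) := by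
    refine (hint 0).mono' (by fun_prop) ?_
    filter_upwards [ae_restrict_mem measurableSet_Ici] with r (hr : 0 ≤ r)
    rw [norm_mul, norm_mul, norm_of_nonneg (exp_pos _).le, norm_of_nonneg (exp_pos _).le,
      norm_eq_abs, abs_of_nonneg hr, pow_zero, one_mul, mul_left_comm, ← exp_add]
    exact le_of_eq (by ring_nf)
  have hmom' : ∀ n : ℕ, ∫ r in Set.Ici (0:ℝ), r ^ n * (g r * exp (-r)) = 0 := by
    simpa only [mul_assoc] using hmom
  filter_upwards [ae_eq_zero_of_integral_pow_mul_eq_zero (by fun_prop) one_half_pos hexp hmom']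
    with r hr
  exact (mul_eq_zero.1 hr).resolve_right (exp_pos _).ne'
end

section
/- Let (X,d) be a metric space, m a Borel measure on X, x₀ ∈ X a fixed point, and B_r(x₀) the open ball of radius r about x₀. Suppose there exist constants C > 0 and N ≥ 1 such that m(B_r(x₀)) ≤ C · max(1, r^N) for all r > 0. Then for every p > 0 and every t > 0, both sides of the following identity are finite and it holds: ∫_X d(x₀,x)^{2p} exp(−d(x₀,x)²/(4t)) dm(x) = ∫₀^∞ m(B_r(x₀)) · ( r^{2p+1}/(2t) − 2p r^{2p−1} ) · exp(−r²/(4t)) dr. -/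
/-!
The function `g(r) = r^{2p} e^{-r²/4t}` vanishes at infinity and `F = -g'` is the integrand on the
right, so `g(d) = ∫_d^∞ F`. Substituting `d = d(x₀, x)` and integrating over `X`, Fubini turns
`∫_X ∫_{d(x₀,x)}^∞ F(r) dr dm` into `∫_0^∞ m{x | d(x₀,x) < r} F(r) dr`. It applies because `F`
decays like a Gaussian while `m(B_r(x₀))` grows only polynomially.
-/

open MeasureTheory Real Set Filter Topology

noncomputable def gaussianMoment (p t r : ℝ) : ℝ := r ^ (2 * p) * exp (-(r ^ 2) / (4 * t))

noncomputable def gaussianMomentDensity (p t r : ℝ) : ℝ :=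
  (r ^ (2 * p + 1) / (2 * t) - 2 * p * r ^ (2 * p - 1)) * exp (-(r ^ 2) / (4 * t))

lemma integrableOn_rpow_mul_exp_neg_sq_div {a c : ℝ} (ha : -1 < a) (hc : 0 < c) :
    IntegrableOn (fun r : ℝ => r ^ a * exp (-(r ^ 2) / c)) (Ioi 0) := by
  simpa only [neg_div, div_eq_inv_mul, mul_neg, neg_mul] using
    integrableOn_rpow_mul_exp_neg_mul_sq (inv_pos.2 hc) ha

section GaussianMoment

variable {p t : ℝ}

lemma integrableOn_rpow_mul_gaussianMomentDensity (hp : 0 < p) (ht : 0 < t) {q : ℝ}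
    (hq : 0 ≤ q) : IntegrableOn (fun r => r ^ q * gaussianMomentDensity p t r) (Ioi 0) := by
  have hsum := ((integrableOn_rpow_mul_exp_neg_sq_div (a := q + (2 * p + 1)) (by linarith)
      (by positivity : 0 < 4 * t)).const_mul (1 / (2 * t))).sub
    ((integrableOn_rpow_mul_exp_neg_sq_div (a := q + (2 * p - 1)) (by linarith)
      (by positivity : 0 < 4 * t)).const_mul (2 * p))
  refine IntegrableOn.congr_fun hsum (fun r (hr : 0 < r) => ?_) measurableSet_Ioi
  simp only [Pi.sub_apply, gaussianMomentDensity, rpow_add hr]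
  ring

lemma integrableOn_gaussianMomentDensity (hp : 0 < p) (ht : 0 < t) :
    IntegrableOn (gaussianMomentDensity p t) (Ioi 0) := by
  simpa using integrableOn_rpow_mul_gaussianMomentDensity hp ht le_rfl

lemma hasDerivAt_gaussianMoment {r : ℝ} (hr : 0 < r) :
    HasDerivAt (gaussianMoment p t) (-gaussianMomentDensity p t r) r := by
  have hexp := (((hasDerivAt_pow 2 r).fun_neg).div_const (4 * t)).exp
  refine ((hasDerivAt_rpow_const (p := 2 * p) (Or.inl hr.ne')).mul hexp).congr_deriv ?_
  simp only [gaussianMomentDensity, rpow_add_one hr.ne']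
  push_cast
  ring

lemma tendsto_gaussianMoment_atTop (ht : 0 < t) :
    Tendsto (gaussianMoment p t) atTop (𝓝 0) := by
  have hdecay := (rpow_mul_exp_neg_mul_sq_isLittleO_exp_neg (inv_pos.2 (by positivity : 0 < 4 * t))
    (2 * p)).tendsto_zero_of_tendsto
      (tendsto_exp_atBot.comp (tendsto_id.const_mul_atTop_of_neg (by norm_num)))
  show Tendsto (fun r => r ^ (2 * p) * exp (-(r ^ 2) / (4 * t))) atTop (𝓝 0)
  simpa only [neg_div, div_eq_inv_mul, neg_mul, mul_neg] using hdecay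

lemma integral_Ioi_gaussianMomentDensity (hp : 0 < p) (ht : 0 < t) {s : ℝ} (hs : 0 ≤ s) :
    ∫ r in Ioi s, gaussianMomentDensity p t r = gaussianMoment p t s := by
  have hcont : ContinuousAt (gaussianMoment p t) s :=
    (continuousAt_rpow_const s (2 * p) (Or.inr (by positivity))).mul (by fun_prop)
  have hftc := integral_Ioi_of_hasDerivAt_of_tendsto (f := fun r => -gaussianMoment p t r)
    hcont.neg.continuousWithinAt
    (fun r hr => by simpa using (hasDerivAt_gaussianMoment (lt_of_le_of_lt hs hr)).fun_neg)
    ((integrableOn_gaussianMomentDensity hp ht).mono_set (Ioi_subset_Ioi hs))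
    (by simpa using (tendsto_gaussianMoment_atTop ht).neg)
  simpa using hftc

lemma integrableOn_mul_gaussianMomentDensity_of_norm_le {C N : ℝ} (hp : 0 < p) (ht : 0 < t)
    (hN : 0 ≤ N) {V : ℝ → ℝ} (hV : AEStronglyMeasurable V (volume.restrict (Ioi 0)))
    (hbound : ∀ r, 0 < r → ‖V r‖ ≤ C * max 1 (r ^ N)) :
    IntegrableOn (fun r => V r * gaussianMomentDensity p t r) (Ioi 0) := by
  have hD := integrableOn_gaussianMomentDensity hp ht
  have hDN := integrableOn_rpow_mul_gaussianMomentDensity hp ht hN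
  refine Integrable.mono' ((hD.norm.add hDN.norm).const_mul C) (hV.mul hD.aestronglyMeasurable) ?_
  filter_upwards [self_mem_ae_restrict measurableSet_Ioi] with r (hr : 0 < r)
  have hrN : 0 ≤ r ^ N := rpow_nonneg hr.le N
  have hC : 0 ≤ C := nonneg_of_mul_nonneg_left ((norm_nonneg _).trans (hbound r hr))
    (by positivity)
  calc ‖V r * gaussianMomentDensity p t r‖
      ≤ C * max 1 (r ^ N) * ‖gaussianMomentDensity p t r‖ := by
        rw [norm_mul]; exact mul_le_mul_of_nonneg_right (hbound r hr) (norm_nonneg _)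
    _ ≤ C * (1 + r ^ N) * ‖gaussianMomentDensity p t r‖ := by
        gcongr; exact max_le (by linarith) (by linarith)
    _ = C * (‖gaussianMomentDensity p t r‖ + ‖r ^ N * gaussianMomentDensity p t r‖) := by
        rw [norm_mul, Real.norm_of_nonneg hrN]; ring

end GaussianMoment

lemma indicator_Ioi_apply_eq_indicator_setOf_lt {α : Type*} (F : ℝ → ℝ) (f : α → ℝ) (r : ℝ)
    (x : α) : (Ioi (f x)).indicator F r = {y | f y < r}.indicator (fun _ => F r) x := by
  simp only [indicator_apply, mem_Ioi, mem_ofPred_eq]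

section TailSlicing

variable {α : Type*} [MeasurableSpace α] {μ : Measure α} {f : α → ℝ} {F : ℝ → ℝ}

lemma sigmaFinite_of_measure_setOf_lt_lt_top (hfin : ∀ r, 0 < r → μ {x | f x < r} < ⊤) :
    SigmaFinite μ := by
  refine Measure.sigmaFinite_of_countable (countable_range fun n : ℕ => {x | f x < n + 1})
    (forall_mem_range.2 fun n => hfin _ (by positivity)) ?_
  refine sUnion_eq_univ_iff.2 fun x => ⟨_, mem_range_self ⌈f x⌉₊, ?_⟩
  exact lt_of_le_of_lt (Nat.le_ceil _) (lt_add_one (⌈f x⌉₊ : ℝ))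

lemma integral_indicator_Ioi_comp (hf : Measurable f) (r : ℝ) :
    ∫ x, (Ioi (f x)).indicator F r ∂μ = μ.real {x | f x < r} * F r := by
  simp only [indicator_Ioi_apply_eq_indicator_setOf_lt F f r]
  rw [integral_indicator_const _ (measurableSet_lt hf measurable_const), smul_eq_mul]

lemma measurable_measure_setOf_lt (μ : Measure α) (f : α → ℝ) :
    Measurable fun r => μ {x | f x < r} :=
  Monotone.measurable fun _ _ hrs => measure_mono fun _ hx => lt_of_lt_of_le hx hrs

lemma setIntegral_Ioi_zero_indicator_Ioi {s : ℝ} (hs : 0 ≤ s) :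
    ∫ r in Ioi 0, (Ioi s).indicator F r = ∫ r in Ioi s, F r := by
  rw [integral_indicator measurableSet_Ioi, Measure.restrict_restrict measurableSet_Ioi,
    Ioi_inter_Ioi, sup_eq_left.2 hs]

variable (hf : Measurable f) (hF : AEStronglyMeasurable F (volume.restrict (Ioi 0)))
  (hfin : ∀ r, 0 < r → μ {x | f x < r} < ⊤)
  (hint : IntegrableOn (fun r => μ.real {x | f x < r} * F r) (Ioi 0))
include hf hF hfin hint

lemma integrable_uncurry_indicator_Ioi_comp :
    Integrable (Function.uncurry fun r x => (Ioi (f x)).indicator F r)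
      ((volume.restrict (Ioi 0)).prod μ) := by
  have : SigmaFinite μ := sigmaFinite_of_measure_setOf_lt_lt_top hfin
  have hmeas : AEStronglyMeasurable (Function.uncurry fun r x => (Ioi (f x)).indicator F r)
      ((volume.restrict (Ioi 0)).prod μ) := by
    have hS : MeasurableSet {q : ℝ × α | f q.2 < q.1} :=
      measurableSet_lt (hf.comp measurable_snd) measurable_fst
    exact hF.comp_fst.indicator hS
  refine (integrable_prod_iff hmeas).2 ⟨?_, ?_⟩
  · filter_upwards [self_mem_ae_restrict measurableSet_Ioi] with r hr
    simp only [Function.uncurry_apply_pair, indicator_Ioi_apply_eq_indicator_setOf_lt F f r]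
    exact (integrable_indicator_iff (measurableSet_lt hf measurable_const)).2
      (integrableOn_const (hfin r hr).ne)
  · refine hint.norm.congr (Eventually.of_forall fun r => ?_)
    simp only [Function.uncurry_apply_pair, norm_mul, Real.norm_of_nonneg measureReal_nonneg,
      norm_indicator_eq_indicator_norm]
    exact (integral_indicator_Ioi_comp (F := fun a => ‖F a‖) hf r).symm

lemma integrable_setIntegral_Ioi_comp (hf0 : ∀ x, 0 ≤ f x) :
    Integrable (fun x => ∫ r in Ioi (f x), F r) μ := by
  have : SigmaFinite μ := sigmaFinite_of_measure_setOf_lt_lt_top hfin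
  exact (integrable_uncurry_indicator_Ioi_comp hf hF hfin hint).integral_prod_right.congr
    (Eventually.of_forall fun x => setIntegral_Ioi_zero_indicator_Ioi (hf0 x))

lemma integral_setIntegral_Ioi_comp_eq_integral_meas_lt_mul (hf0 : ∀ x, 0 ≤ f x) :
    ∫ x, (∫ r in Ioi (f x), F r) ∂μ = ∫ r in Ioi 0, μ.real {x | f x < r} * F r := by
  have : SigmaFinite μ := sigmaFinite_of_measure_setOf_lt_lt_top hfin
  calc ∫ x, (∫ r in Ioi (f x), F r) ∂μ = ∫ x, (∫ r in Ioi 0, (Ioi (f x)).indicator F r) ∂μ := by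
        simp only [setIntegral_Ioi_zero_indicator_Ioi (hf0 _)]
    _ = ∫ r in Ioi 0, ∫ x, (Ioi (f x)).indicator F r ∂μ :=
        (integral_integral_swap (integrable_uncurry_indicator_Ioi_comp hf hF hfin hint)).symm
    _ = ∫ r in Ioi 0, μ.real {x | f x < r} * F r := by
        simp only [integral_indicator_Ioi_comp hf]

end TailSlicing

/-- Gaussian moment identity via the volume function: under polynomial volume
growth `m(B_r(x₀)) ≤ C·max(1, r^N)`, for all `p > 0` and `t > 0` both sides of
`∫ d^{2p} e^{-d²/(4t)} dm = ∫₀^∞ m(B_r) (r^{2p+1}/(2t) - 2p r^{2p-1}) e^{-r²/(4t)} dr`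
are finite and the identity holds. -/
theorem gaussian_moment_identity
    {X : Type*} [MetricSpace X] [MeasurableSpace X] [BorelSpace X]
    (m : Measure X) (x₀ : X) (C N : ℝ) (hC : 0 < C) (hN : 1 ≤ N)
    (hgrowth : ∀ r : ℝ, 0 < r →
      m (Metric.ball x₀ r) ≤ ENNReal.ofReal (C * max 1 (r ^ N))) :
    ∀ p t : ℝ, 0 < p → 0 < t →
      Integrable
        (fun x => dist x₀ x ^ (2 * p) * Real.exp (-(dist x₀ x ^ 2) / (4 * t))) m ∧
      IntegrableOn
        (fun r => (m (Metric.ball x₀ r)).toReal *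
          (r ^ (2 * p + 1) / (2 * t) - 2 * p * r ^ (2 * p - 1)) *
          Real.exp (-(r ^ 2) / (4 * t))) (Set.Ioi (0:ℝ)) ∧
      ∫ x, dist x₀ x ^ (2 * p) * Real.exp (-(dist x₀ x ^ 2) / (4 * t)) ∂m
        = ∫ r in Set.Ioi (0:ℝ),
            (m (Metric.ball x₀ r)).toReal *
              (r ^ (2 * p + 1) / (2 * t) - 2 * p * r ^ (2 * p - 1)) *
              Real.exp (-(r ^ 2) / (4 * t)) := by
  intro p t hp ht
  have hball : ∀ r, Metric.ball x₀ r = {x | dist x₀ x < r} := fun r => by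
    ext x; exact Metric.mem_ball'
  have hdist : Measurable (dist x₀) := (continuous_const.dist continuous_id).measurable
  have hfin : ∀ r, 0 < r → m {x | dist x₀ x < r} < ⊤ := fun r hr =>
    hball r ▸ (hgrowth r hr).trans_lt ENNReal.ofReal_lt_top
  have hvolume : AEStronglyMeasurable (fun r => m.real {x | dist x₀ x < r})
      (volume.restrict (Ioi 0)) :=
    (measurable_measure_setOf_lt m (dist x₀)).ennreal_toReal.aestronglyMeasurable
  have hvolume_le : ∀ r, 0 < r → ‖m.real {x | dist x₀ x < r}‖ ≤ C * max 1 (r ^ N) :=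
    fun r hr => by
      rw [Real.norm_of_nonneg measureReal_nonneg, ← hball]
      exact ENNReal.toReal_le_of_le_ofReal (by positivity) (hgrowth r hr)
  have hint := integrableOn_mul_gaussianMomentDensity_of_norm_le hp ht (by linarith) hvolume
    hvolume_le
  have hD := (integrableOn_gaussianMomentDensity hp ht).aestronglyMeasurable
  have hmoment : (fun x => dist x₀ x ^ (2 * p) * exp (-(dist x₀ x ^ 2) / (4 * t))) =
      fun x => ∫ r in Ioi (dist x₀ x), gaussianMomentDensity p t r :=
    funext fun x => (integral_Ioi_gaussianMomentDensity hp ht dist_nonneg).symm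
  have hshape : ∀ r, (m (Metric.ball x₀ r)).toReal *
      (r ^ (2 * p + 1) / (2 * t) - 2 * p * r ^ (2 * p - 1)) * exp (-(r ^ 2) / (4 * t)) =
      m.real {x | dist x₀ x < r} * gaussianMomentDensity p t r := fun r => by
    rw [hball, measureReal_def, gaussianMomentDensity, mul_assoc]
  rw [hmoment]
  simp only [hshape]
  exact ⟨integrable_setIntegral_Ioi_comp hdist hD hfin hint (fun _ => dist_nonneg), hint,
    integral_setIntegral_Ioi_comp_eq_integral_meas_lt_mul hdist hD hfin hint
      (fun _ => dist_nonneg)⟩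
end

section
/- Let (X,d) be a metric space, m a Borel measure on X, x₀ ∈ X a fixed point, and let N > 0 and c* > 0. Suppose that for every t > 0 the integral Z(t) := ∫_X exp(−d(x₀,x)²/(4t)) dm(x) is finite and equals c* t^{N/2}. Define the probability density ρ̂_t(x) := exp(−d(x₀,x)²/(4t)) / (c* t^{N/2}). Then for every t > 0 the function ρ̂_t log ρ̂_t is m-integrable and ∫_X ρ̂_t log ρ̂_t dm = −N/2 − log c* − (N/2) log t. -/
open MeasureTheory Real ProbabilityTheory Filter Set

/-!
Writing `Z(t) = ∫ exp(-d(x₀,x)²/(4t)) dm`, we have `log ρ̂_t = -d(x₀,·)²/(4t) - log Z(t)`, so the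
entropy is `-(∫ d² e^{-d²/(4t)} dm)/(4t Z(t)) - log Z(t)`. The second moment is `4t² Z'(t)`:
`Z` is the moment generating function of `-d(x₀,·)²` evaluated at `1/(4t)`, which may be
differentiated under the integral sign on the open set where it is finite. With
`Z(t) = c* t^{N/2}` this gives `-t Z'(t)/Z(t) = -N/2`.
-/

section

variable {Ω : Type*} [MeasurableSpace Ω] {μ : Measure Ω}

lemma integrable_and_integral_eq_of_lintegral_ofReal_eq {f : Ω → ℝ} {C : ℝ}
    (hfm : AEStronglyMeasurable f μ) (hf : 0 ≤ᵐ[μ] f) (hC : 0 ≤ C)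
    (h : ∫⁻ ω, ENNReal.ofReal (f ω) ∂μ = ENNReal.ofReal C) :
    Integrable f μ ∧ ∫ ω, f ω ∂μ = C :=
  ⟨(lintegral_ofReal_ne_top_iff_integrable hfm hf).1 (h ▸ ENNReal.ofReal_ne_top),
    by rw [integral_eq_lintegral_of_nonneg_ae hf hfm, h, ENNReal.toReal_ofReal hC]⟩

lemma mem_interior_integrableExpSet_of_pos {Y : Ω → ℝ} {s : ℝ}
    (h : ∀ u, 0 < u → Integrable (fun ω ↦ exp (u * Y ω)) μ) (hs : 0 < s) :
    s ∈ interior (integrableExpSet Y μ) :=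
  mem_interior_iff_mem_nhds.2 (mem_of_superset (Ioi_mem_nhds hs) h)

variable {φ : Ω → ℝ} {t : ℝ}

lemma integrable_mul_exp_neg_div_four_mul_and_hasDerivAt
    (h : ∀ t, 0 < t → Integrable (fun ω ↦ exp (-φ ω / (4 * t))) μ) (ht : 0 < t) :
    Integrable (fun ω ↦ φ ω * exp (-φ ω / (4 * t))) μ ∧
      HasDerivAt (fun t ↦ ∫ ω, exp (-φ ω / (4 * t)) ∂μ)
        ((∫ ω, φ ω * exp (-φ ω / (4 * t)) ∂μ) / (4 * t ^ 2)) t := by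
  have hexp : ∀ u, 0 < u → Integrable (fun ω ↦ exp (u * -φ ω)) μ := fun u hu ↦ by
    convert h (4⁻¹ * u⁻¹) (by positivity) using 3 with ω
    field_simp
  have hs := mem_interior_integrableExpSet_of_pos hexp (inv_pos.2 (by positivity : 0 < 4 * t))
  have hmgf := (hasDerivAt_mgf hs).comp t (((hasDerivAt_id t).const_mul 4).inv (by positivity))
  have hfun : mgf (fun ω ↦ -φ ω) μ ∘ (fun u ↦ 4 * id u)⁻¹ =
      fun u ↦ ∫ ω, exp (-φ ω / (4 * u)) ∂μ := by
    funext u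
    simp [mgf, div_eq_inv_mul]
  refine ⟨?_, hfun ▸ hmgf.congr_deriv ?_⟩
  · simpa [div_eq_inv_mul] using
      (integrable_pow_mul_exp_of_mem_interior_integrableExpSet hs 1).neg
  · simp only [id, neg_mul, integral_neg, div_eq_inv_mul]
    field_simp

lemma integrable_and_integral_exp_neg_div_mul_log {a K : ℝ} (hK : K ≠ 0)
    (h₀ : Integrable (fun ω ↦ exp (-φ ω / a)) μ)
    (h₁ : Integrable (fun ω ↦ φ ω * exp (-φ ω / a)) μ) :
    Integrable (fun ω ↦ exp (-φ ω / a) / K * log (exp (-φ ω / a) / K)) μ ∧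
      ∫ ω, exp (-φ ω / a) / K * log (exp (-φ ω / a) / K) ∂μ
        = -(∫ ω, φ ω * exp (-φ ω / a) ∂μ) / (a * K) - log K / K * ∫ ω, exp (-φ ω / a) ∂μ := by
  have hpt : ∀ ω, exp (-φ ω / a) / K * log (exp (-φ ω / a) / K)
      = -(a * K)⁻¹ * (φ ω * exp (-φ ω / a)) + -(log K / K) * exp (-φ ω / a) := fun ω ↦ by
    rw [log_div (exp_ne_zero _) hK, log_exp]
    ring
  simp only [hpt]
  refine ⟨(h₁.const_mul _).add (h₀.const_mul _), ?_⟩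
  rw [integral_add (h₁.const_mul _) (h₀.const_mul _), integral_const_mul, integral_const_mul]
  ring

end

theorem gaussian_entropy_general
    {X : Type*} [MetricSpace X] [MeasurableSpace X] [BorelSpace X]
    (m : Measure X) (x₀ : X) (N cstar : ℝ) (hc : 0 < cstar)
    (hZ : ∀ t : ℝ, 0 < t →
      ∫⁻ x, ENNReal.ofReal (Real.exp (-(dist x₀ x ^ 2) / (4 * t))) ∂m
        = ENNReal.ofReal (cstar * t ^ (N / 2))) :
    ∀ t : ℝ, 0 < t →
      Integrable
        (fun x => (Real.exp (-(dist x₀ x ^ 2) / (4 * t)) / (cstar * t ^ (N / 2))) *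
          Real.log (Real.exp (-(dist x₀ x ^ 2) / (4 * t)) / (cstar * t ^ (N / 2)))) m ∧
      ∫ x, (Real.exp (-(dist x₀ x ^ 2) / (4 * t)) / (cstar * t ^ (N / 2))) *
          Real.log (Real.exp (-(dist x₀ x ^ 2) / (4 * t)) / (cstar * t ^ (N / 2))) ∂m
        = -N / 2 - Real.log cstar - N / 2 * Real.log t := by
  have hZint : ∀ t, 0 < t → Integrable (fun x ↦ exp (-(dist x₀ x ^ 2) / (4 * t))) m ∧
      ∫ x, exp (-(dist x₀ x ^ 2) / (4 * t)) ∂m = cstar * t ^ (N / 2) := fun t ht ↦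
    integrable_and_integral_eq_of_lintegral_ofReal_eq
      (Continuous.aestronglyMeasurable (by fun_prop)) (ae_of_all _ fun _ ↦ (exp_pos _).le)
      (by positivity) (hZ t ht)
  intro t ht
  obtain ⟨hmoment, hderiv⟩ :=
    integrable_mul_exp_neg_div_four_mul_and_hasDerivAt (fun t ht ↦ (hZint t ht).1) ht
  have hderiv' : HasDerivAt (fun t ↦ ∫ x, exp (-(dist x₀ x ^ 2) / (4 * t)) ∂m)
      (cstar * (N / 2 * t ^ (N / 2 - 1))) t :=
    ((hasDerivAt_rpow_const (Or.inl ht.ne')).const_mul cstar).congr_of_eventuallyEq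
      (eventually_gt_nhds ht |>.mono fun u hu ↦ (hZint u hu).2)
  have hsecond_moment := hderiv.unique hderiv'
  have hK : 0 < cstar * t ^ (N / 2) := by positivity
  obtain ⟨hint, heq⟩ := integrable_and_integral_exp_neg_div_mul_log hK.ne' (hZint t ht).1 hmoment
  refine ⟨hint, ?_⟩
  rw [heq, (hZint t ht).2, log_mul hc.ne' (by positivity), log_rpow ht]
  rw [div_eq_iff (by positivity)] at hsecond_moment
  rw [hsecond_moment, rpow_sub_one ht.ne']
  field_simp
  ring

/-- Entropy of the Gaussian-type measure: if `Z(t) = ∫ exp(-d(x₀,x)²/(4t)) dm`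
is finite and equals `c* t^{N/2}` for every `t > 0`, then the density
`ρ̂_t = exp(-d(x₀,·)²/(4t))/(c* t^{N/2})` satisfies
`∫ ρ̂_t log ρ̂_t dm = -N/2 - log c* - (N/2) log t`. -/
theorem gaussian_entropy
    {X : Type*} [MetricSpace X] [MeasurableSpace X] [BorelSpace X]
    (m : Measure X) (x₀ : X) (N cstar : ℝ) (hN : 0 < N) (hc : 0 < cstar)
    (hZ : ∀ t : ℝ, 0 < t →
      ∫⁻ x, ENNReal.ofReal (Real.exp (-(dist x₀ x ^ 2) / (4 * t))) ∂m
        = ENNReal.ofReal (cstar * t ^ (N / 2))) :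
    ∀ t : ℝ, 0 < t →
      Integrable
        (fun x => (Real.exp (-(dist x₀ x ^ 2) / (4 * t)) / (cstar * t ^ (N / 2))) *
          Real.log (Real.exp (-(dist x₀ x ^ 2) / (4 * t)) / (cstar * t ^ (N / 2)))) m ∧
      ∫ x, (Real.exp (-(dist x₀ x ^ 2) / (4 * t)) / (cstar * t ^ (N / 2))) *
          Real.log (Real.exp (-(dist x₀ x ^ 2) / (4 * t)) / (cstar * t ^ (N / 2))) ∂m
        = -N / 2 - Real.log cstar - N / 2 * Real.log t :=
  gaussian_entropy_general m x₀ N cstar hc hZ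
end

section
/- Let (X,d) be a metric space, m a Borel measure on X, x₀ ∈ X a fixed point with 0 < m(B_r(x₀)) < ∞ for all r > 0, where B_r(x₀) is the open ball of radius r about x₀, and let N ≥ 1. Assume m satisfies the Bishop–Gromov inequality of exponent N at x₀, i.e. m(B_R(x₀)) ≤ (R/r)^N m(B_r(x₀)) for all 0 < r < R. Let p : (0,∞) × X → (0,∞) be a function such that for every δ ∈ (0,2) there exists a constant C(δ) ≥ 1 with (1/(C(δ) m(B_{√t}(x₀)))) exp(−d(x₀,x)²/((4−δ)t)) ≤ p(t,x) ≤ (C(δ)/m(B_{√t}(x₀))) exp(−d(x₀,x)²/((4+δ)t)) for all t ∈ (0,1] and all x ∈ X. Then 4t log p(t,x) → −d(x₀,x)² as t ↓ 0, uniformly on every bounded subset of X. -/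
open MeasureTheory Real Filter Topology

/-! Taking logarithms in the Gaussian bounds with parameter `δ` gives
`|4t log p(t,x) + d(x₀,x)²| ≤ 4t log C(δ) + 4|t log m(B_{√t}(x₀))| + δ d(x₀,x)²/(4-δ)`.
The volume term is harmless because Bishop–Gromov squeezes `m(B_{√t}(x₀))` between
`t^{N/2} m(B_1(x₀))` and `m(B_1(x₀))`, and `t log t → 0`. So on a bounded set one first
chooses `δ` to make the last term small and then `t` to make the first two small. -/

theorem tendsto_mul_log_of_rpow_mul_le_of_le {f : ℝ → ℝ} {c a M : ℝ} (hc : 0 < c)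
    (hlo : ∀ᶠ t in 𝓝[>] 0, c * t ^ a ≤ f t) (hhi : ∀ᶠ t in 𝓝[>] 0, f t ≤ M) :
    Tendsto (fun t => t * log (f t)) (𝓝[>] 0) (𝓝 0) := by
  have hmul_log : Tendsto (fun t : ℝ => t * log t) (𝓝[>] 0) (𝓝 0) := by
    simpa using (continuous_mul_log.tendsto 0).mono_left nhdsWithin_le_nhds
  have hid : Tendsto (fun t : ℝ => t) (𝓝[>] 0) (𝓝 0) := nhdsWithin_le_nhds
  have hlower : Tendsto (fun t => t * log c + a * (t * log t)) (𝓝[>] 0) (𝓝 0) := by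
    simpa using (hid.mul_const (log c)).add (hmul_log.const_mul a)
  have hupper : Tendsto (fun t => t * log M) (𝓝[>] 0) (𝓝 0) := by
    simpa using hid.mul_const (log M)
  refine tendsto_of_tendsto_of_tendsto_of_le_of_le' hlower hupper ?_ ?_
  all_goals
    filter_upwards [self_mem_nhdsWithin, hlo, hhi] with t (ht : 0 < t) hlo hhi
    have hf : 0 < f t := lt_of_lt_of_le (by positivity) hlo
  · have hlog := log_le_log (by positivity) hlo
    rw [log_mul hc.ne' (by positivity), log_rpow ht] at hlog
    calc t * log c + a * (t * log t) = t * (log c + a * log t) := by ring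
      _ ≤ t * log (f t) := by gcongr
  · exact mul_le_mul_of_nonneg_left (log_le_log hf hhi) ht.le

section BishopGromov

variable {X : Type*} [MetricSpace X] [MeasurableSpace X] {m : Measure X} {x₀ : X}

theorem toReal_measure_ball_pos
    (hball : ∀ r : ℝ, 0 < r → 0 < m (Metric.ball x₀ r) ∧ m (Metric.ball x₀ r) < ⊤)
    {r : ℝ} (hr : 0 < r) : 0 < (m (Metric.ball x₀ r)).toReal :=
  ENNReal.toReal_pos (hball r hr).1.ne' (hball r hr).2.ne

theorem rpow_mul_measure_ball_one_le {N : ℝ}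
    (hball : ∀ r : ℝ, 0 < r → 0 < m (Metric.ball x₀ r) ∧ m (Metric.ball x₀ r) < ⊤)
    (hBG : ∀ r R : ℝ, 0 < r → r < R →
      m (Metric.ball x₀ R) ≤ ENNReal.ofReal ((R / r) ^ N) * m (Metric.ball x₀ r))
    {t : ℝ} (ht : t ∈ Set.Ioo 0 1) :
    (m (Metric.ball x₀ 1)).toReal * t ^ (N / 2) ≤ (m (Metric.ball x₀ (√t))).toReal := by
  have hst : 0 < √t := sqrt_pos.2 ht.1
  have hBG' := ENNReal.toReal_mono (ENNReal.mul_ne_top ENNReal.ofReal_ne_top (hball _ hst).2.ne)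
    (hBG (√t) 1 hst ((sqrt_lt' one_pos).2 (by simpa using ht.2)))
  have hpow : t ^ (N / 2) = √t ^ N := by
    rw [sqrt_eq_rpow, ← rpow_mul ht.1.le, one_div_mul_eq_div]
  rw [ENNReal.toReal_mul, ENNReal.toReal_ofReal (by positivity), div_rpow zero_le_one hst.le,
    one_rpow, one_div_mul_eq_div] at hBG'
  rwa [hpow, ← le_div_iff₀ (by positivity)]

theorem tendsto_mul_log_measure_ball_sqrt {N : ℝ}
    (hball : ∀ r : ℝ, 0 < r → 0 < m (Metric.ball x₀ r) ∧ m (Metric.ball x₀ r) < ⊤)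
    (hBG : ∀ r R : ℝ, 0 < r → r < R →
      m (Metric.ball x₀ R) ≤ ENNReal.ofReal ((R / r) ^ N) * m (Metric.ball x₀ r)) :
    Tendsto (fun t => t * log (m (Metric.ball x₀ (√t))).toReal) (𝓝[>] 0) (𝓝 0) := by
  have hsmall : ∀ᶠ t in 𝓝[>] (0 : ℝ), t ∈ Set.Ioo 0 1 := Ioo_mem_nhdsGT one_pos
  refine tendsto_mul_log_of_rpow_mul_le_of_le (M := (m (Metric.ball x₀ 1)).toReal)
    (toReal_measure_ball_pos hball one_pos)
    (hsmall.mono fun t ht => rpow_mul_measure_ball_one_le hball hBG ht) (hsmall.mono ?_)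
  intro t ht
  exact ENNReal.toReal_mono (hball 1 one_pos).2.ne
    (measure_mono (Metric.ball_subset_ball (sqrt_le_one.2 ht.2.le)))

end BishopGromov

theorem abs_four_mul_log_add_le_of_gaussian_bounds {t V C δ a q : ℝ} (ht : 0 < t) (hV : 0 < V)
    (hC : 1 ≤ C) (hδ : δ ∈ Set.Ioo 0 4) (ha : 0 ≤ a)
    (hlo : 1 / (C * V) * exp (-a / ((4 - δ) * t)) ≤ q)
    (hhi : q ≤ C / V * exp (-a / ((4 + δ) * t))) :
    |4 * t * log q + a| ≤ 4 * t * log C + 4 * |t * log V| + δ * a / (4 - δ) := by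
  obtain ⟨hδ0, hδ4⟩ := hδ
  have hC0 : 0 < C := by linarith
  have hq : 0 < q := lt_of_lt_of_le (by positivity) hlo
  have hlog_lo := log_le_log (by positivity) hlo
  have hlog_hi := log_le_log hq hhi
  rw [log_mul (by positivity) (exp_ne_zero _), log_exp, one_div, log_inv,
    log_mul hC0.ne' hV.ne'] at hlog_lo
  rw [log_mul (by positivity) (exp_ne_zero _), log_exp, log_div hC0.ne' hV.ne'] at hlog_hi
  have hexp_lo : 4 * t * (-a / ((4 - δ) * t)) = -a - δ * a / (4 - δ) := by
    field_simp [show 4 - δ ≠ 0 by linarith]; ring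
  have hexp_hi : 4 * t * (-a / ((4 + δ) * t)) = -a + δ * a / (4 + δ) := by
    field_simp [show 4 + δ ≠ 0 by linarith]; ring
  have hcmp : δ * a / (4 + δ) ≤ δ * a / (4 - δ) := by
    gcongr
    linarith
  have hlogC : 0 ≤ log C := log_nonneg hC
  have hq_lo := mul_le_mul_of_nonneg_left hlog_lo (by positivity : (0 : ℝ) ≤ 4 * t)
  have hq_hi := mul_le_mul_of_nonneg_left hlog_hi (by positivity : (0 : ℝ) ≤ 4 * t)
  rw [abs_le]
  constructor <;> linarith [neg_abs_le (t * log V), le_abs_self (t * log V)]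

theorem varadhan_short_time_general
    {X : Type*} [MetricSpace X] [MeasurableSpace X]
    (m : Measure X) (x₀ : X) (N : ℝ)
    (hball : ∀ r : ℝ, 0 < r →
      0 < m (Metric.ball x₀ r) ∧ m (Metric.ball x₀ r) < ⊤)
    (hBG : ∀ r R : ℝ, 0 < r → r < R →
      m (Metric.ball x₀ R) ≤ ENNReal.ofReal ((R / r) ^ N) * m (Metric.ball x₀ r))
    (p : ℝ → X → ℝ)
    (hbounds : ∀ δ ∈ Set.Ioo (0:ℝ) 2, ∃ Cδ : ℝ, 1 ≤ Cδ ∧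
      ∀ t ∈ Set.Ioc (0:ℝ) 1, ∀ x : X,
        (1 / (Cδ * (m (Metric.ball x₀ (Real.sqrt t))).toReal)) *
            Real.exp (-(dist x₀ x ^ 2) / ((4 - δ) * t)) ≤ p t x ∧
        p t x ≤ (Cδ / (m (Metric.ball x₀ (Real.sqrt t))).toReal) *
            Real.exp (-(dist x₀ x ^ 2) / ((4 + δ) * t))) :
    ∀ B : Set X, Bornology.IsBounded B →
      TendstoUniformlyOn (fun t x => 4 * t * Real.log (p t x))
        (fun x => -(dist x₀ x ^ 2)) (nhdsWithin 0 (Set.Ioi (0:ℝ))) B := by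
  intro B hB
  obtain ⟨D, hD⟩ := hB.subset_closedBall x₀
  rw [Metric.tendstoUniformlyOn_iff]
  intro ε hε
  have hδ_small : Tendsto (fun δ : ℝ => δ * D ^ 2 / (4 - δ)) (𝓝[>] 0) (𝓝 0) := by
    have : ContinuousAt (fun δ : ℝ => δ * D ^ 2 / (4 - δ)) 0 := by fun_prop (disch := norm_num)
    simpa using this.tendsto.mono_left nhdsWithin_le_nhds
  obtain ⟨δ, hδε, hδ⟩ := ((hδ_small.eventually (gt_mem_nhds (half_pos hε))).and
    (Ioo_mem_nhdsGT two_pos)).exists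
  obtain ⟨C, hC, hpC⟩ := hbounds δ hδ
  have hrest : Tendsto (fun t => 4 * t * log C + 4 * |t * log (m (Metric.ball x₀ (√t))).toReal|)
      (𝓝[>] 0) (𝓝 0) := by
    simpa using ((tendsto_nhdsWithin_of_tendsto_nhds tendsto_id).const_mul 4).mul_const (log C)
      |>.add ((tendsto_mul_log_measure_ball_sqrt hball hBG).abs.const_mul 4)
  filter_upwards [Ioo_mem_nhdsGT one_pos, hrest.eventually (gt_mem_nhds (half_pos hε))]
    with t ht htε x hx
  have hdist : dist x₀ x ≤ D := by simpa [dist_comm] using hD hx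
  obtain ⟨hlo, hhi⟩ := hpC t ⟨ht.1, ht.2.le⟩ x
  rw [dist_comm, Real.dist_eq, sub_neg_eq_add]
  have hδ4 : δ < 4 := by linarith [hδ.2]
  calc |4 * t * log (p t x) + dist x₀ x ^ 2|
      ≤ _ + δ * dist x₀ x ^ 2 / (4 - δ) :=
        abs_four_mul_log_add_le_of_gaussian_bounds ht.1
          (toReal_measure_ball_pos hball (sqrt_pos.2 ht.1)) hC ⟨hδ.1, hδ4⟩ (sq_nonneg _)
          hlo hhi
    _ ≤ _ + δ * D ^ 2 / (4 - δ) := by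
        gcongr
        exact hδ.1.le
    _ < ε / 2 + ε / 2 := add_lt_add htε hδε
    _ = ε := add_halves ε

/-- Varadhan-type short-time asymptotics from two-sided Gaussian heat kernel
bounds and the Bishop–Gromov inequality: `4t log p(t,x) → -d(x₀,x)²` as
`t ↓ 0`, uniformly on every bounded subset of `X`. -/
theorem varadhan_short_time
    {X : Type*} [MetricSpace X] [MeasurableSpace X] [BorelSpace X]
    (m : Measure X) (x₀ : X) (N : ℝ) (hN : 1 ≤ N)
    (hball : ∀ r : ℝ, 0 < r →
      0 < m (Metric.ball x₀ r) ∧ m (Metric.ball x₀ r) < ⊤)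
    (hBG : ∀ r R : ℝ, 0 < r → r < R →
      m (Metric.ball x₀ R) ≤ ENNReal.ofReal ((R / r) ^ N) * m (Metric.ball x₀ r))
    (p : ℝ → X → ℝ) (hp : ∀ t : ℝ, ∀ x : X, 0 < t → 0 < p t x)
    (hbounds : ∀ δ ∈ Set.Ioo (0:ℝ) 2, ∃ Cδ : ℝ, 1 ≤ Cδ ∧
      ∀ t ∈ Set.Ioc (0:ℝ) 1, ∀ x : X,
        (1 / (Cδ * (m (Metric.ball x₀ (Real.sqrt t))).toReal)) *
            Real.exp (-(dist x₀ x ^ 2) / ((4 - δ) * t)) ≤ p t x ∧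
        p t x ≤ (Cδ / (m (Metric.ball x₀ (Real.sqrt t))).toReal) *
            Real.exp (-(dist x₀ x ^ 2) / ((4 + δ) * t))) :
    ∀ B : Set X, Bornology.IsBounded B →
      TendstoUniformlyOn (fun t x => 4 * t * Real.log (p t x))
        (fun x => -(dist x₀ x ^ 2)) (nhdsWithin 0 (Set.Ioi (0:ℝ))) B :=
  varadhan_short_time_general m x₀ N hball hBG p hbounds
end
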